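/- Let ε > 0, c > 0, and let g : [0,∞) → ℝ be continuous with g(t) ≥ c for all t. Suppose φ : [0,∞) → ℝ is differentiable with φ'(t) = −ε·g(t)·sin(φ(t)) and |φ(0)| < π. Then φ(t) → 0 as t → ∞. In particular, the two oscillators achieve in-phase synchronization. -/

import Mathlib

open Real Set Filter Topology

/-!
`V = 1 - cos φ` is a Lyapunov function: `V' = -ε g sin² φ ≤ 0`, so `cos φ(t) ≥ cos φ(0) > -1`
and, by continuity, `φ` never leaves `(-π, π)`. Writing `sin² φ = (1 - cos φ)(1 + cos φ)`, this
gives `V' ≤ -k V` with `k = ε c (1 + cos φ(0)) > 0`, so `V` decays exponentially by Grönwall,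
and `φ² ≤ π² V / 2` on `[-π, π]` forces `φ → 0`.
-/

lemma one_sub_cos_nonneg (x : ℝ) : 0 ≤ 1 - cos x := sub_nonneg.2 (cos_le_one x)

lemma one_add_cos_nonneg (x : ℝ) : 0 ≤ 1 + cos x := by linarith [neg_one_le_cos x]

lemma neg_one_lt_cos_of_abs_lt_pi {x : ℝ} (hx : |x| < π) : -1 < cos x := by
  have := cos_lt_cos_of_nonneg_of_le_pi (abs_nonneg x) le_rfl hx
  rwa [cos_pi, cos_abs] at this

lemma sq_le_pi_sq_div_two_mul_one_sub_cos {x : ℝ} (hx : |x| ≤ π) :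
    x ^ 2 ≤ π ^ 2 / 2 * (1 - cos x) := by
  have h := cos_le_one_sub_mul_cos_sq hx
  have hπ : 0 < π ^ 2 := by positivity
  calc x ^ 2 = π ^ 2 / 2 * (2 / π ^ 2 * x ^ 2) := by field_simp
    _ ≤ π ^ 2 / 2 * (1 - cos x) := by gcongr; linarith

lemma tendsto_zero_of_tendsto_one_sub_cos {α : Type*} {l : Filter α} {φ : α → ℝ}
    (hφ : ∀ᶠ x in l, |φ x| ≤ π) (h : Tendsto (fun x => 1 - cos (φ x)) l (𝓝 0)) :
    Tendsto φ l (𝓝 0) := by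
  have hsq : Tendsto (fun x => φ x ^ 2) l (𝓝 0) := by
    refine squeeze_zero' (Eventually.of_forall fun x => sq_nonneg _) ?_
      (by simpa using h.const_mul (π ^ 2 / 2))
    filter_upwards [hφ] with x hx using sq_le_pi_sq_div_two_mul_one_sub_cos hx
  exact (tendsto_zero_iff_abs_tendsto_zero φ).2
    (by simpa [sqrt_sq_eq_abs, Function.comp_def] using hsq.sqrt)

lemma abs_lt_pi_of_neg_one_lt_cos {φ : ℝ → ℝ} (hφ : ContinuousOn φ (Ici 0)) (h0 : |φ 0| < π)
    (hcos : ∀ t, 0 ≤ t → -1 < cos (φ t)) {t : ℝ} (ht : 0 ≤ t) : |φ t| < π := by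
  by_contra! hπ
  obtain ⟨s, hs, hφs⟩ := intermediate_value_Icc ht
    ((hφ.mono Icc_subset_Ici_self).abs) ⟨h0.le, hπ⟩
  have := hcos s hs.1
  rw [← cos_abs, show |φ s| = π from hφs, cos_pi] at this
  exact lt_irrefl _ this

lemma le_mul_exp_neg_of_hasDerivAt_le {f f' : ℝ → ℝ} {k : ℝ}
    (hf : ∀ t, 0 ≤ t → HasDerivAt f (f' t) t) (bound : ∀ t, 0 ≤ t → f' t ≤ -k * f t)
    {t : ℝ} (ht : 0 ≤ t) : f t ≤ f 0 * exp (-k * t) := by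
  have hcont : ContinuousOn f (Icc 0 t) := fun x hx =>
    (hf x hx.1).continuousAt.continuousWithinAt
  have := le_gronwallBound_of_liminf_deriv_right_le (K := -k) (ε := 0) hcont
    (fun x hx _ hr => (hf x hx.1).hasDerivWithinAt.liminf_right_slope_le hr) le_rfl
    (fun x hx => (add_zero (-k * f x)).symm ▸ bound x hx.1) t ⟨ht, le_rfl⟩
  rwa [gronwallBound_ε0, sub_zero] at this

section PhaseEquation

variable {ε : ℝ} {g φ : ℝ → ℝ}

lemma hasDerivAt_one_sub_cos_phase
    (hφ : ∀ t, 0 ≤ t → HasDerivAt φ (-ε * g t * sin (φ t)) t) {t : ℝ} (ht : 0 ≤ t) :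
    HasDerivAt (fun t => 1 - cos (φ t)) (-(ε * g t * (1 - cos (φ t)) * (1 + cos (φ t)))) t := by
  refine (((hasDerivAt_cos (φ t)).comp t (hφ t ht)).const_sub 1).congr_deriv ?_
  linear_combination -(ε * g t) * sin_sq_add_cos_sq (φ t)

lemma cos_phase_zero_le (hε : 0 ≤ ε) (hg : ∀ t, 0 ≤ t → 0 ≤ g t)
    (hφ : ∀ t, 0 ≤ t → HasDerivAt φ (-ε * g t * sin (φ t)) t) {t : ℝ} (ht : 0 ≤ t) :
    cos (φ 0) ≤ cos (φ t) := by
  have hV_anti : AntitoneOn (fun t => 1 - cos (φ t)) (Ici 0) := by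
    refine antitoneOn_of_hasDerivWithinAt_nonpos (convex_Ici 0)
      (fun t ht => (hasDerivAt_one_sub_cos_phase hφ ht).continuousAt.continuousWithinAt)
      (fun t ht => (hasDerivAt_one_sub_cos_phase hφ (interior_subset ht)).hasDerivWithinAt)
      (fun t ht => ?_)
    have := mul_nonneg (mul_nonneg (mul_nonneg hε (hg t (interior_subset ht)))
      (one_sub_cos_nonneg (φ t))) (one_add_cos_nonneg (φ t))
    linarith
  linarith [hV_anti self_mem_Ici ht ht]

lemma abs_phase_lt_pi (hε : 0 ≤ ε) (hg : ∀ t, 0 ≤ t → 0 ≤ g t)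
    (hφ : ∀ t, 0 ≤ t → HasDerivAt φ (-ε * g t * sin (φ t)) t) (h0 : |φ 0| < π)
    {t : ℝ} (ht : 0 ≤ t) : |φ t| < π :=
  abs_lt_pi_of_neg_one_lt_cos (fun s hs => (hφ s hs).continuousAt.continuousWithinAt) h0
    (fun _ hs => (neg_one_lt_cos_of_abs_lt_pi h0).trans_le (cos_phase_zero_le hε hg hφ hs)) ht

lemma one_sub_cos_phase_le_mul_exp {c : ℝ} (hε : 0 ≤ ε) (hc : 0 ≤ c)
    (hg : ∀ t, 0 ≤ t → c ≤ g t)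
    (hφ : ∀ t, 0 ≤ t → HasDerivAt φ (-ε * g t * sin (φ t)) t) {t : ℝ} (ht : 0 ≤ t) :
    1 - cos (φ t) ≤ (1 - cos (φ 0)) * exp (-(ε * c * (1 + cos (φ 0))) * t) := by
  refine le_mul_exp_neg_of_hasDerivAt_le (fun s hs => hasDerivAt_one_sub_cos_phase hφ hs)
    (fun s hs => ?_) ht
  have hg_s := hg s hs
  have := one_sub_cos_nonneg (φ s)
  have := cos_phase_zero_le hε (fun t ht => hc.trans (hg t ht)) hφ hs
  have : ε * c * (1 + cos (φ 0)) * (1 - cos (φ s))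
      ≤ ε * g s * (1 + cos (φ s)) * (1 - cos (φ s)) := by
    gcongr
    · exact one_add_cos_nonneg (φ 0)
    · exact mul_nonneg hε (hc.trans hg_s)
  linarith

end PhaseEquation

theorem phase_difference_convergence_general
    (ε c : ℝ) (hε : 0 < ε) (hc : 0 < c) (g : ℝ → ℝ)
    (hg : ∀ t, 0 ≤ t → c ≤ g t)
    (φ : ℝ → ℝ)
    (hφ : ∀ t, 0 ≤ t → HasDerivAt φ (-ε * g t * Real.sin (φ t)) t)
    (h0 : |φ 0| < π) :
    Filter.Tendsto φ Filter.atTop (nhds 0) := by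
  have hg₀ : ∀ t, 0 ≤ t → 0 ≤ g t := fun t ht => hc.le.trans (hg t ht)
  have hk : 0 < ε * c * (1 + cos (φ 0)) :=
    mul_pos (mul_pos hε hc) (by linarith [neg_one_lt_cos_of_abs_lt_pi h0])
  have hexp : Tendsto (fun t => (1 - cos (φ 0)) * exp (-(ε * c * (1 + cos (φ 0))) * t)) atTop
      (𝓝 0) := by
    simpa [neg_mul] using (tendsto_exp_neg_atTop_nhds_zero.comp
      (tendsto_id.const_mul_atTop hk)).const_mul (1 - cos (φ 0))
  have hV : Tendsto (fun t => 1 - cos (φ t)) atTop (𝓝 0) :=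
    squeeze_zero' (Eventually.of_forall fun t => one_sub_cos_nonneg (φ t))
      ((eventually_ge_atTop 0).mono fun _ ht => one_sub_cos_phase_le_mul_exp hε.le hc.le hg hφ ht)
      hexp
  exact tendsto_zero_of_tendsto_one_sub_cos
    ((eventually_ge_atTop 0).mono fun _ ht => (abs_phase_lt_pi hε.le hg₀ hφ h0 ht).le) hV

/-- In-phase synchronization: for `φ' = −ε g(t) sin(φ)` with `g(t) ≥ c > 0` and
`|φ(0)| < π`, the phase difference `φ(t)` converges to `0` as `t → ∞`. -/
theorem phase_difference_convergence
    (ε c : ℝ) (hε : 0 < ε) (hc : 0 < c) (g : ℝ → ℝ)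
    (hg_cont : ContinuousOn g (Set.Ici (0 : ℝ)))
    (hg : ∀ t, 0 ≤ t → c ≤ g t)
    (φ : ℝ → ℝ)
    (hφ : ∀ t, 0 ≤ t → HasDerivAt φ (-ε * g t * Real.sin (φ t)) t)
    (h0 : |φ 0| < π) :
    Filter.Tendsto φ Filter.atTop (nhds 0) :=
  phase_difference_convergence_general ε c hε hc g hg φ hφ h0
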